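/- arXiv:1805.10159 — 2 statements merged into one kernel-verified Lean document; each statement's English description precedes it below -/
import Mathlib

section
/- Let f be a positive non-canalyzing Boolean function on {0,1}^n, n ≠ 4, such that for each variable x_i both restrictions f|_{x_i=0} and f|_{x_i=1} are canalyzing. Then there exists a point y of Hamming weight 2 such that y is a minimal one of f and its complement (flipping all coordinates) is a maximal zero of f. -/
/-- `f` is positive (monotone): componentwise `x ≤ y` and `f x = 1` imply `f y = 1`. -/
def Positive {n : ℕ} (f : (Fin n → Bool) → Bool) : Prop :=
  ∀ x y : Fin n → Bool, x ≤ y → f x = true → f y = true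

/-- `y` is a minimal true point of `f`. -/
def MinOne {n : ℕ} (f : (Fin n → Bool) → Bool) (y : Fin n → Bool) : Prop :=
  f y = true ∧ ∀ z : Fin n → Bool, z ≤ y → z ≠ y → f z = false

/-- `y` is a maximal false point of `f`. -/
def MaxZero {n : ℕ} (f : (Fin n → Bool) → Bool) (y : Fin n → Bool) : Prop :=
  f y = false ∧ ∀ z : Fin n → Bool, y ≤ z → z ≠ y → f z = true

/-- Variable `i` is relevant for `f`. -/
def Relevant {n : ℕ} (f : (Fin n → Bool) → Bool) (i : Fin n) : Prop :=
  ∃ x : Fin n → Bool, f (Function.update x i false) ≠ f (Function.update x i true)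

/-- `f` is canalyzing: fixing some variable to some value makes it constant. -/
def Canalyzing {n : ℕ} (f : (Fin n → Bool) → Bool) : Prop :=
  ∃ (i : Fin n) (b c : Bool), ∀ x : Fin n → Bool, f (Function.update x i b) = c

/-- The restriction `f|_{x_i = b}`, an `n`-variable function obtained from the
`(n+1)`-variable function `f` by fixing coordinate `i` to `b`. -/
def restrict {n : ℕ} (f : (Fin (n + 1) → Bool) → Bool) (i : Fin (n + 1)) (b : Bool) :
    (Fin n → Bool) → Bool :=
  fun a => f (i.insertNth b a)

/-!
Call a pair `{i, j}` true if `f` is true at its characteristic vector `e_ij`, and co-false if `f`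
is false at `¬e_ij`, i.e. if the pair is true for the dual `fᵈ x = ¬f (¬x)`; duality swaps the two
notions and preserves positivity, canalyzation and restrictions. As `f` is monotone and not
canalyzing, it is false at every `e_i`, and a canalyzing restriction `f|_{x_i=1}` then forces a
true pair through `i`; dually every `i` lies on a co-false pair. Monotonicity makes every true pair
meet every co-false pair. With `n ≠ 4` variables some vertex avoids any two disjoint pairs, and
its co-false (true) pair cannot meet both, so true pairs pairwise intersect, and so do co-false
ones; a short case analysis then gives a pair that is both. It is a minimal one, since `f` vanishes at the `e_i`,
and dually `¬e_ij` is a maximal zero.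
-/

theorem Fintype.exists_fifth_of_card_ne_four {V : Type*} [Fintype V] (hV : Fintype.card V ≠ 4)
    {a b c d : V} (hab : a ≠ b) (hac : a ≠ c) (had : a ≠ d) (hbc : b ≠ c) (hbd : b ≠ d)
    (hcd : c ≠ d) :
    ∃ v, v ≠ a ∧ v ≠ b ∧ v ≠ c ∧ v ≠ d := by
  classical
  by_contra! hall
  apply hV
  rw [← Finset.card_univ, Finset.card_eq_four]
  refine ⟨a, b, c, d, hab, hac, had, hbc, hbd, hcd, (Finset.eq_univ_of_forall fun v => ?_).symm⟩
  simp only [Finset.mem_insert, Finset.mem_singleton]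
  tauto

namespace SimpleGraph

variable {V : Type*} {G H : SimpleGraph V}

def EdgesMeet (G H : SimpleGraph V) : Prop :=
  ∀ a b c d, G.Adj a b → H.Adj c d → a = c ∨ a = d ∨ b = c ∨ b = d

theorem EdgesMeet.symm (h : EdgesMeet G H) : EdgesMeet H G := by
  intro a b c d hab hcd
  have := h c d a b hcd hab
  tauto

theorem EdgesMeet.self [Fintype V] (hGH : EdgesMeet G H) (hH : ∀ v, ∃ w, H.Adj v w)
    (hV : Fintype.card V ≠ 4) : EdgesMeet G G := by
  intro a b c d hab hcd
  by_contra! hdisj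
  obtain ⟨hac, had, hbc, hbd⟩ := hdisj
  obtain ⟨v, hva, hvb, hvc, hvd⟩ :=
    Fintype.exists_fifth_of_card_ne_four hV hab.ne hac had hbc hbd hcd.ne
  -- the `H`-edge at a vertex off both `G`-edges would have to meet both in its other end
  obtain ⟨w, hvw⟩ := hH v
  have hab_vw := hGH a b v w hab hvw
  have hcd_vw := hGH c d v w hcd hvw
  grind

theorem EdgesMeet.exists_adj_adj [Fintype V] [Nonempty V] (hGH : EdgesMeet G H)
    (hG : ∀ v, ∃ w, G.Adj v w) (hH : ∀ v, ∃ w, H.Adj v w) (hV : Fintype.card V ≠ 4) :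
    ∃ a b, G.Adj a b ∧ H.Adj a b := by
  by_contra! hno
  obtain ⟨a⟩ := ‹Nonempty V›
  obtain ⟨b, hab⟩ := hG a
  obtain ⟨c, hac⟩ := hH a
  obtain ⟨d, hbd⟩ := hH b
  have hcb : c ≠ b := fun h => hno a b hab (h ▸ hac)
  have hda : d ≠ a := fun h => hno a b hab (h ▸ hbd).symm
  -- either `ac`, `bd` are disjoint `H`-edges, or `c = d` and a `G`-edge at `c` avoids `ab`
  rcases eq_or_ne c d with rfl | hcd
  · obtain ⟨e, hce⟩ := hG c
    have := hGH.self hH hV a b c e hab hce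
    have hea : e ≠ a := fun h => hno a c (h ▸ hce).symm hac
    have heb : e ≠ b := fun h => hno b c (h ▸ hce).symm hbd
    grind [hac.ne, hbd.ne]
  · have := hGH.symm.self hG hV a c b d hac hbd
    grind [hab.ne]

end SimpleGraph

theorem Positive.monotone {m : ℕ} {f : (Fin m → Bool) → Bool} (hf : Positive f) :
    Monotone f := by
  intro x y hxy
  cases hx : f x
  · exact Bool.false_le _
  · rw [hf x y hxy hx]

namespace BooleanFunction

open Function

variable {m : ℕ} {f : (Fin m → Bool) → Bool}

theorem apply_eq_false_of_le (hf : Monotone f) {x y : Fin m → Bool} (hxy : x ≤ y)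
    (hy : f y = false) : f x = false :=
  le_bot_iff.mp (hy ▸ hf hxy :)

theorem apply_eq_true_of_le (hf : Monotone f) {x y : Fin m → Bool} (hxy : x ≤ y)
    (hx : f x = true) : f y = true :=
  top_le_iff.mp (hx ▸ hf hxy :)

def dual (f : (Fin m → Bool) → Bool) : (Fin m → Bool) → Bool := fun x => !f xᶜ

@[simp]
theorem dual_apply (x : Fin m → Bool) : dual f x = !f xᶜ := rfl

@[simp]
theorem dual_dual (f : (Fin m → Bool) → Bool) : dual (dual f) = f := by
  funext x
  simp

theorem monotone_dual (hf : Monotone f) : Monotone (dual f) :=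
  fun _ _ hxy => compl_le_compl (hf (compl_le_compl hxy))

theorem compl_update (x : Fin m → Bool) (i : Fin m) (b : Bool) :
    (update x i b)ᶜ = update xᶜ i (!b) :=
  comp_update (compl : Bool → Bool) x i b

theorem canalyzing_dual_iff : Canalyzing (dual f) ↔ Canalyzing f := by
  suffices ∀ {f : (Fin m → Bool) → Bool}, Canalyzing f → Canalyzing (dual f) from
    ⟨fun h => dual_dual f ▸ this h, this⟩
  rintro f ⟨i, b, c, h⟩
  exact ⟨i, !b, !c, fun x => by simp [compl_update, h]⟩

theorem compl_insertNth {n : ℕ} (i : Fin (n + 1)) (b : Bool) (x : Fin n → Bool) :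
    (i.insertNth b x : Fin (n + 1) → Bool)ᶜ = (i.insertNth (!b) xᶜ : Fin (n + 1) → Bool) := by
  refine Fin.eq_insertNth_iff.2 ⟨?_, ?_⟩
  · simp
  · funext j
    simp [Fin.removeNth]

theorem restrict_dual {n : ℕ} (f : (Fin (n + 1) → Bool) → Bool) (i : Fin (n + 1)) (b : Bool) :
    restrict (dual f) i b = dual (restrict f i (!b)) := by
  funext x
  simp [restrict, compl_insertNth]

theorem maxZero_compl_of_minOne_dual {y : Fin m → Bool} (h : MinOne (dual f) y) :
    MaxZero f yᶜ := by
  refine ⟨by simpa using h.1, fun z hz hne => ?_⟩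
  simpa using h.2 zᶜ (compl_le_iff_compl_le.mp hz) (fun h => hne (by rw [← h, compl_compl]))

def charVec (s : Finset (Fin m)) : Fin m → Bool := fun p => decide (p ∈ s)

@[simp]
theorem charVec_apply (s : Finset (Fin m)) (p : Fin m) : charVec s p = decide (p ∈ s) := rfl

theorem update_charVec (s : Finset (Fin m)) (i : Fin m) (b : Bool) :
    update (charVec s) i b = charVec (if b then insert i s else s.erase i) := by
  funext p
  rcases eq_or_ne p i with rfl | hpi <;> cases b <;> simp [*]

theorem charVec_le_iff {s : Finset (Fin m)} {x : Fin m → Bool} :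
    charVec s ≤ x ↔ ∀ p ∈ s, x p = true := by
  simp [Pi.le_def, Bool.le_iff_imp]

theorem ncard_setOf_charVec (s : Finset (Fin m)) : {p | charVec s p = true}.ncard = s.card := by
  rw [← Set.ncard_coe_finset]
  congr
  ext
  simp

theorem apply_charVec_singleton (hf : Monotone f) (hnc : ¬ Canalyzing f) (i : Fin m) :
    f (charVec {i}) = false := by
  by_contra h
  exact hnc ⟨i, true, true, fun x =>
    apply_eq_true_of_le hf (charVec_le_iff.2 (by simp)) (Bool.eq_true_of_not_eq_false h)⟩

def trueGraph (f : (Fin m → Bool) → Bool) : SimpleGraph (Fin m) where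
  Adj i j := i ≠ j ∧ f (charVec {i, j}) = true
  symm := ⟨fun i j h => ⟨h.1.symm, by rw [Finset.pair_comm]; exact h.2⟩⟩
  loopless := ⟨fun _ h => h.1 rfl⟩

theorem exists_update_eq_of_canalyzing_restrict {n : ℕ} {f : (Fin (n + 1) → Bool) → Bool}
    {i : Fin (n + 1)} {b : Bool} (h : Canalyzing (restrict f i b)) :
    ∃ j ≠ i, ∃ b' c, ∀ y, y i = b → f (update y j b') = c := by
  obtain ⟨j, b', c, h⟩ := h
  refine ⟨i.succAbove j, Fin.succAbove_ne i j, b', c, fun y hy => ?_⟩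
  simpa [restrict, ← hy] using h (i.removeNth y)

theorem exists_trueGraph_adj {n : ℕ} {f : (Fin (n + 1) → Bool) → Bool} (hf : Monotone f)
    (hnc : ¬ Canalyzing f) {i : Fin (n + 1)} (hi : Canalyzing (restrict f i true)) :
    ∃ j, (trueGraph f).Adj i j := by
  obtain ⟨j, hji, b, c, h⟩ := exists_update_eq_of_canalyzing_restrict hi
  -- `c = false` spreads by monotonicity to all of `x_j = b`; `b = false` makes `f` true at `e_i`
  cases c
  · exact (hnc ⟨j, b, false, fun x => apply_eq_false_of_le hf
      (update_le_update_iff.2 ⟨le_rfl, fun _ _ => le_top⟩) (h ⊤ rfl)⟩).elim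
  have hfi := h (charVec {i}) (by simp)
  cases b
  · simp [update_charVec, hji, apply_charVec_singleton hf hnc] at hfi
  · exact ⟨j, hji.symm, by simpa [update_charVec, Finset.pair_comm] using hfi⟩

theorem edgesMeet_trueGraph_dual (hf : Monotone f) :
    (trueGraph f).EdgesMeet (trueGraph (dual f)) := by
  rintro a b c d ⟨-, hab⟩ ⟨-, hcd⟩
  by_contra! hdisj
  have hle : charVec {a, b} ≤ (charVec {c, d})ᶜ := charVec_le_iff.2 (by simp [hdisj])
  simp [apply_eq_true_of_le hf hle hab] at hcd

theorem minOne_of_forall_update (hf : Monotone f) {y : Fin m → Bool} (hy : f y = true)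
    (hmin : ∀ i, y i = true → f (update y i false) = false) : MinOne f y := by
  refine ⟨hy, fun z hzy hne => ?_⟩
  obtain ⟨i, hi⟩ := Function.ne_iff.1 hne
  obtain ⟨hzi, hyi⟩ : z i = false ∧ y i = true := by
    have := hzy i
    revert hi this
    cases z i <;> cases y i <;> simp
  exact apply_eq_false_of_le hf (le_update_iff.2 ⟨hzi.le, fun j _ => hzy j⟩) (hmin i hyi)

theorem minOne_charVec_pair (hf : Monotone f) (hnc : ¬ Canalyzing f) {i j : Fin m} (hij : i ≠ j)
    (h : f (charVec {i, j}) = true) : MinOne f (charVec {i, j}) := by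
  refine minOne_of_forall_update hf h fun p hp => ?_
  rcases (by simpa using hp : p = i ∨ p = j) with rfl | rfl
  · simpa [update_charVec, hij] using apply_charVec_singleton hf hnc j
  · simpa [update_charVec, Finset.erase_insert_of_ne hij] using apply_charVec_singleton hf hnc i

end BooleanFunction

open BooleanFunction in
theorem minimal_one_with_complementary_maximal_zero {n : ℕ}
    (f : (Fin (n + 1) → Bool) → Bool)
    (hn : n + 1 ≠ 4)
    (hf : Positive f) (hnc : ¬ Canalyzing f)
    (hres : ∀ (i : Fin (n + 1)) (b : Bool), Canalyzing (restrict f i b)) :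
    ∃ y : Fin (n + 1) → Bool,
      {j : Fin (n + 1) | y j = true}.ncard = 2 ∧
      MinOne f y ∧ MaxZero f (fun j => ! y j) := by
  have hmono := hf.monotone
  have hdual_mono := monotone_dual hmono
  have hdual_nc : ¬ Canalyzing (dual f) := canalyzing_dual_iff.not.2 hnc
  obtain ⟨i, j, ⟨hij, hfij⟩, -, hdij⟩ := (edgesMeet_trueGraph_dual hmono).exists_adj_adj
    (fun i => exists_trueGraph_adj hmono hnc (hres i true))
    (fun i => exists_trueGraph_adj hdual_mono hdual_nc
      (by rw [restrict_dual]; exact canalyzing_dual_iff.2 (hres i false)))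
    (by simpa using hn)
  refine ⟨charVec {i, j}, ?_, minOne_charVec_pair hmono hnc hij hfij,
    maxZero_compl_of_minOne_dual (minOne_charVec_pair hdual_mono hdual_nc hij hdij)⟩
  rw [ncard_setOf_charVec, Finset.card_pair hij]
end

section
/- Let f be a positive non-canalyzing Boolean function on {0,1}^n such that for each variable both of its restrictions are canalyzing, and suppose y is a minimal one of f of Hamming weight 2 with 1's in coordinates i and s and with the complement of y a maximal zero of f. Then if a point a in {0,1}^{n-1} is an extremal point of f|_{x_i=α} (α ∈ {0,1}), the point obtained from a by inserting α in coordinate i is an extremal point of f. -/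
/-! A minimal true point `a` of `f|_{x_i=α}` lifts to a minimal true point of `f` unless `α = 1`
and `f` stays true after lowering coordinate `i` to `0`. The weight-two point `y` rules this out:
its restriction `c = y|_{x_i=1}` is an atom, so either `c ≤ a`, whence `a = c` by minimality and
the lowered point lies strictly below `y`; or `a` is disjoint from `c`, and the lowered point
lies below the maximal false point `yᶜ`. Maximal false points follow by passing to the dual
function `x ↦ ¬f(¬x)`, which preserves positivity and swaps the roles of `y` and `yᶜ`. -/

variable {n : ℕ}

lemma Positive.apply_eq_false_of_le {f : (Fin n → Bool) → Bool} (hf : Positive f)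
    {x y : Fin n → Bool} (hxy : x ≤ y) (hy : f y = false) : f x = false := by
  cases hx : f x
  · rfl
  · rw [← hy, hf x y hxy hx]

theorem Fin.insertNth_compl {β : Type*} [Compl β] (i : Fin (n + 1)) (x : β) (p : Fin n → β) :
    (i.insertNth x p)ᶜ = Fin.insertNth (α := fun _ => β) i xᶜ pᶜ := by
  ext j
  induction j using i.succAboveCases <;> simp

section Dual

def dual (f : (Fin n → Bool) → Bool) : (Fin n → Bool) → Bool := fun x => !f xᶜ

variable {f : (Fin n → Bool) → Bool}

@[simp]
lemma dual_dual : dual (dual f) = f := by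
  funext x
  simp [dual]

lemma Positive.dual (hf : Positive f) : Positive (dual f) := by
  intro x y hxy hx
  simp only [_root_.dual, Bool.not_eq_eq_eq_not, Bool.not_true] at hx ⊢
  exact hf.apply_eq_false_of_le (compl_le_compl hxy) hx

lemma minOne_dual_iff {x : Fin n → Bool} : MinOne (dual f) x ↔ MaxZero f xᶜ := by
  simp only [MinOne, MaxZero, dual, Bool.not_eq_eq_eq_not, Bool.not_true, Bool.not_false]
  refine and_congr_right fun _ => Iff.trans ?_ compl_involutive.surjective.forall.symm
  simp only [compl_le_compl_iff_le, ne_eq, compl_inj_iff]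

lemma maxZero_dual_iff {x : Fin n → Bool} : MaxZero (dual f) x ↔ MinOne f xᶜ := by
  simpa using (minOne_dual_iff (f := dual f) (x := xᶜ)).symm

lemma restrict_dual {f : (Fin (n + 1) → Bool) → Bool} (i : Fin (n + 1)) (b : Bool) :
    restrict (dual f) i b = dual (restrict f i (!b)) := by
  funext a
  simp [restrict, dual, Fin.insertNth_compl, Bool.compl_eq_bnot]

end Dual

section Restriction

variable {f : (Fin (n + 1) → Bool) → Bool} {i : Fin (n + 1)} {a : Fin n → Bool}

lemma MinOne.eq_of_le {g : (Fin n → Bool) → Bool} {x : Fin n → Bool} (hx : MinOne g x)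
    {z : Fin n → Bool} (hz : g z = true) (hzx : z ≤ x) : z = x := by
  by_contra hne
  simp [hx.2 z hzx hne] at hz

lemma MinOne.apply_eq_false_of_le_insertNth {b : Bool} (ha : MinOne (restrict f i b) a)
    {z : Fin (n + 1) → Bool} (hz : z ≤ i.insertNth b a) (hne : z ≠ i.insertNth b a)
    (hzi : z i = b) : f z = false := by
  rw [← Fin.insertNth_self_removeNth i z, hzi] at hne ⊢
  exact ha.2 _ (Fin.le_insertNth_iff.1 hz).2 fun h => hne (h ▸ rfl)

lemma MinOne.insertNth_false (ha : MinOne (restrict f i false) a) :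
    MinOne f (i.insertNth false a) :=
  ⟨ha.1, fun _ hz hne => ha.apply_eq_false_of_le_insertNth hz hne <|
    Bool.eq_false_of_le_false (Fin.le_insertNth_iff.1 hz).1⟩

lemma MinOne.insertNth_true (hf : Positive f) (ha : MinOne (restrict f i true) a)
    (h : f (i.insertNth false a) = false) : MinOne f (i.insertNth true a) := by
  refine ⟨ha.1, fun z hz hne => ?_⟩
  cases hzi : z i
  · exact hf.apply_eq_false_of_le
      (Fin.le_insertNth_iff.2 ⟨hzi.le, (Fin.le_insertNth_iff.1 hz).2⟩) h
  · exact ha.apply_eq_false_of_le_insertNth hz hne hzi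

variable {y : Fin (n + 1) → Bool}

lemma apply_insertNth_false_eq_false (hf : Positive f)
    (hy1 : MinOne f y) (hy0 : f yᶜ = false) (hyi : y i = true) (hatom : IsAtom (i.removeNth y))
    (ha : MinOne (restrict f i true) a) : f (i.insertNth false a) = false := by
  by_cases hle : i.removeNth y ≤ a
  · have hfy : restrict f i true (i.removeNth y) = true := by
      rw [restrict, Fin.insertNth_removeNth, Function.update_eq_self_iff.2 hyi.symm]
      exact hy1.1
    rw [← ha.eq_of_le hfy hle, Fin.insertNth_removeNth]
    refine hy1.2 _ (update_le_iff.2 ⟨Bool.false_le _, fun _ _ => le_rfl⟩) fun h => ?_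
    simpa [hyi] using congrFun h i
  · refine hf.apply_eq_false_of_le (Fin.insertNth_le_iff.2 ⟨Bool.false_le _, ?_⟩) hy0
    exact (hatom.not_le_iff_disjoint.1 hle).symm.le_compl_right

lemma minOne_insertNth_of_minOne_restrict (hf : Positive f) (hy1 : MinOne f y)
    (hy0 : MaxZero f yᶜ) (hyi : y i = true) (hatom : IsAtom (i.removeNth y)) :
    ∀ b : Bool, MinOne (restrict f i b) a → MinOne f (i.insertNth b a)
  | false, ha => ha.insertNth_false
  | true, ha => ha.insertNth_true hf (apply_insertNth_false_eq_false hf hy1 hy0.1 hyi hatom ha)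

lemma maxZero_insertNth_of_maxZero_restrict (hf : Positive f) (hy1 : MinOne f y)
    (hy0 : MaxZero f yᶜ) (hyi : y i = true) (hatom : IsAtom (i.removeNth y)) (b : Bool)
    (ha : MaxZero (restrict f i b) a) : MaxZero f (i.insertNth b a) := by
  have hdual := minOne_insertNth_of_minOne_restrict (a := aᶜ) hf.dual
    (minOne_dual_iff.2 hy0) (maxZero_dual_iff.2 (by rwa [compl_compl])) hyi hatom (!b)
  rw [restrict_dual, Bool.not_not, minOne_dual_iff, compl_compl, minOne_dual_iff,
    Fin.insertNth_compl, compl_compl, Bool.compl_eq_bnot, Bool.not_not] at hdual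
  exact hdual ha

end Restriction

lemma isAtom_removeNth_pair {i s : Fin (n + 1)} (his : i ≠ s) :
    IsAtom (i.removeNth fun j => decide (j = i ∨ j = s)) := by
  obtain ⟨s', rfl⟩ := Fin.exists_succAbove_eq his.symm
  refine Pi.isAtom_iff.2 ⟨s', by simp [Fin.removeNth], fun j hj => ?_⟩
  simp [Fin.removeNth, Fin.succAbove_ne, hj]

theorem extremal_of_restriction_extremal_general {n : ℕ} (f : (Fin (n + 1) → Bool) → Bool)
    (hf : Positive f)
    (i s : Fin (n + 1)) (his : i ≠ s)
    (y : Fin (n + 1) → Bool) (hy : y = fun j => decide (j = i ∨ j = s))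
    (hy1 : MinOne f y) (hy0 : MaxZero f (fun j => ! y j)) :
    ∀ (α : Bool) (a : Fin n → Bool),
      (MinOne (restrict f i α) a ∨ MaxZero (restrict f i α) a) →
      (MinOne f (i.insertNth α a) ∨ MaxZero f (i.insertNth α a)) := by
  have hyi : y i = true := by simp [hy]
  have hatom : IsAtom (i.removeNth y) := hy ▸ isAtom_removeNth_pair his
  rintro α a (ha | ha)
  · exact .inl (minOne_insertNth_of_minOne_restrict hf hy1 hy0 hyi hatom α ha)
  · exact .inr (maxZero_insertNth_of_maxZero_restrict hf hy1 hy0 hyi hatom α ha)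

theorem extremal_of_restriction_extremal {n : ℕ} (f : (Fin (n + 1) → Bool) → Bool)
    (hf : Positive f) (hnc : ¬ Canalyzing f)
    (hres : ∀ (j : Fin (n + 1)) (b : Bool), Canalyzing (restrict f j b))
    (i s : Fin (n + 1)) (his : i ≠ s)
    (y : Fin (n + 1) → Bool) (hy : y = fun j => decide (j = i ∨ j = s))
    (hy1 : MinOne f y) (hy0 : MaxZero f (fun j => ! y j)) :
    ∀ (α : Bool) (a : Fin n → Bool),
      (MinOne (restrict f i α) a ∨ MaxZero (restrict f i α) a) →
      (MinOne f (i.insertNth α a) ∨ MaxZero f (i.insertNth α a)) :=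
  extremal_of_restriction_extremal_general f hf i s his y hy hy1 hy0
end
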